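/- For every invertible 3×3 real matrix F with positive determinant and every symmetric 3×3 real matrix S, the Frobenius norm satisfies ‖Fᵀ S F⁻ᵀ‖² ≥ (1/2)‖S‖², where F⁻ᵀ denotes the inverse transpose of F. The constant 1/2 is independent of F. -/

import Mathlib

/-!
Conjugation preserves `tr (M * M)`, which for symmetric `S` is `‖S‖²`; on the other
hand `tr (M * M) ≤ ‖M‖²` for every real square matrix, since `‖M - Mᵀ‖² ≥ 0`.
Hence in fact `‖Fᵀ S F⁻ᵀ‖² ≥ ‖S‖²`.
-/

open Matrix

/-- Squared Frobenius norm of a 3×3 real matrix: ‖X‖² = tr(Xᵀ X). -/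
noncomputable def frobSq (X : Matrix (Fin 3) (Fin 3) ℝ) : ℝ := (Xᵀ * X).trace

namespace Matrix

variable {m n : Type*} [Fintype m] [Fintype n]

lemma trace_transpose_mul_self_nonneg (A : Matrix m n ℝ) : 0 ≤ (Aᵀ * A).trace := by
  simpa using (posSemidef_conjTranspose_mul_self A).trace_nonneg

lemma trace_mul_self_le_trace_transpose_mul_self (M : Matrix n n ℝ) :
    (M * M).trace ≤ (Mᵀ * M).trace := by
  have h := trace_transpose_mul_self_nonneg (M - Mᵀ)
  have hMtMt : (Mᵀ * Mᵀ).trace = (M * M).trace := by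
    rw [← transpose_mul, trace_transpose]
  have hMMt : (M * Mᵀ).trace = (Mᵀ * M).trace := trace_mul_comm _ _
  simp only [transpose_sub, transpose_transpose, sub_mul, mul_sub, trace_sub] at h
  linarith

lemma trace_conj_mul_self {R : Type*} [CommRing R] [DecidableEq n] {P : Matrix n n R}
    (hP : IsUnit P) (S : Matrix n n R) :
    ((P * S * P⁻¹) * (P * S * P⁻¹)).trace = (S * S).trace := by
  have hPdet : IsUnit P.det := (isUnit_iff_isUnit_det P).mp hP
  have hconj : (P * S * P⁻¹) * (P * S * P⁻¹) = P * (S * S) * P⁻¹ := by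
    simp only [Matrix.mul_assoc, nonsing_inv_mul_cancel_left _ _ hPdet]
  rw [hconj, trace_conj hP]

end Matrix

/-- For every invertible 3×3 real matrix `F` with positive determinant and every
symmetric 3×3 real matrix `S`, one has ‖Fᵀ S F⁻ᵀ‖² ≥ (1/2)‖S‖². -/
theorem frobSq_conj_ge_half (F S : Matrix (Fin 3) (Fin 3) ℝ)
    (hF : 0 < F.det) (hS : Sᵀ = S) :
    frobSq (Fᵀ * S * (F⁻¹)ᵀ) ≥ (1 / 2) * frobSq S := by
  have hFt : IsUnit Fᵀ :=
    (isUnit_iff_isUnit_det _).mpr (by rw [det_transpose]; exact hF.ne'.isUnit)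
  have hS_nonneg : 0 ≤ frobSq S := trace_transpose_mul_self_nonneg S
  rw [transpose_nonsing_inv]
  calc (1 / 2) * frobSq S ≤ frobSq S := by linarith
    _ = (S * S).trace := by rw [frobSq, hS]
    _ = ((Fᵀ * S * Fᵀ⁻¹) * (Fᵀ * S * Fᵀ⁻¹)).trace := (trace_conj_mul_self hFt S).symm
    _ ≤ frobSq (Fᵀ * S * Fᵀ⁻¹) := trace_mul_self_le_trace_transpose_mul_self _
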